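/- arXiv:2012.13696 — 2 statements merged into one kernel-verified Lean document; each statement's English description precedes it below -/
import Mathlib

section
/- Let G = (V, E) be a finite simple graph with |V| = n, let θ : V → ℝ, and let w_0, ..., w_m be a walk in G that visits every vertex of V. Let v_1, ..., v_n be the enumeration of V in order of first appearance in the walk. Then the number of sign changes along the induced ordering is bounded by the number of unequal consecutive pairs along the walk: ∑_{i=1}^{n-1} 1[θ(v_{i+1}) ≠ θ(v_i)] ≤ ∑_{j=0}^{m-1} 1[θ(w_{j+1}) ≠ θ(w_j)]. -/
/-!
A change of `θ` between consecutive vertices `v i`, `v (i+1)` of the first-appearance order is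
a change of `θ ∘ w` between the walk positions `f (v i) ≤ f (v (i+1))`, so `θ ∘ w` changes at
least once in the window `[f (v i), f (v (i+1)))`. These windows are pairwise disjoint and lie
in `[0, m)`, hence the bound.
-/

open Finset

section ChangePoints

variable {α : Type*} [DecidableEq α]

theorem ite_ne_le_sum_Ico_ite_ne (g : ℕ → α) {b c : ℕ} (hbc : b ≤ c) :
    (if g c ≠ g b then 1 else 0) ≤ ∑ j ∈ Ico b c, if g (j + 1) ≠ g j then 1 else 0 := by
  induction c, hbc using Nat.le_induction with
  | base => simp
  | succ c hbc ih =>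
    rw [sum_Ico_succ_top hbc]
    by_cases hc : g c = g b
    · split_ifs <;> simp_all
    · simp only [hc, ne_eq, not_false_eq_true, if_true] at ih
      split_ifs <;> omega

variable {n : ℕ}

def gapIco (a : Fin n → ℕ) (i : Fin n) : Finset ℕ :=
  if h : (i : ℕ) + 1 < n then Ico (a i) (a ⟨i + 1, h⟩) else ∅

theorem pairwiseDisjoint_gapIco {a : Fin n → ℕ} (ha : Monotone a) :
    (Set.univ : Set (Fin n)).PairwiseDisjoint (gapIco a) := by
  refine ((pairwise_disjoint_on (gapIco a)).2 fun i j hij => ?_).set_pairwise _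
  unfold gapIco
  split_ifs with hi hj
  · refine disjoint_left.2 fun x hxi hxj => ?_
    have : a ⟨i + 1, hi⟩ ≤ a j := ha (Fin.mk_le_of_le_val hij)
    simp only [mem_Ico] at hxi hxj
    omega
  all_goals simp

theorem gapIco_subset_range {m : ℕ} {a : Fin n → ℕ} (ham : ∀ i, a i ≤ m) (i : Fin n) :
    gapIco a i ⊆ range m := by
  unfold gapIco
  split_ifs with h
  · exact fun x hx => mem_range.2 ((mem_Ico.1 hx).2.trans_le (ham _))
  · exact empty_subset _

theorem sum_ite_ne_comp_le_sum_ite_ne (g : ℕ → α) {m : ℕ} {a : Fin n → ℕ} (ha : Monotone a)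
    (ham : ∀ i, a i ≤ m) :
    (∑ i : Fin n, if h : (i : ℕ) + 1 < n then
        (if g (a ⟨i + 1, h⟩) ≠ g (a i) then 1 else 0) else 0)
      ≤ ∑ j ∈ range m, if g (j + 1) ≠ g j then 1 else 0 :=
  calc
    _ ≤ ∑ i : Fin n, ∑ j ∈ gapIco a i, if g (j + 1) ≠ g j then 1 else 0 := by
      refine sum_le_sum fun i _ => ?_
      unfold gapIco
      by_cases h : (i : ℕ) + 1 < n
      · simpa only [dif_pos h] using
          ite_ne_le_sum_Ico_ite_ne g (ha (show i ≤ ⟨i + 1, h⟩ from Nat.le_succ _))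
      · simp [h]
    _ = ∑ j ∈ univ.biUnion (gapIco a), if g (j + 1) ≠ g j then 1 else 0 :=
      (sum_biUnion (by simpa using pairwiseDisjoint_gapIco ha)).symm
    _ ≤ _ := sum_le_sum_of_subset (biUnion_subset.2 fun i _ => gapIco_subset_range ham i)

end ChangePoints

theorem first_appearance_change_points_general {V : Type*} {n : ℕ}
    (θ : V → ℝ)
    (m : ℕ) (w : ℕ → V)
    (f : V → ℕ)
    (hf_le : ∀ u, f u ≤ m)
    (hf_eq : ∀ u, w (f u) = u)
    (v : Fin n → V)
    (horder : StrictMono (f ∘ v)) :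
    (∑ i : Fin n, if h : (i : ℕ) + 1 < n then
        (if θ (v ⟨(i : ℕ) + 1, h⟩) ≠ θ (v i) then 1 else 0) else 0)
      ≤ ∑ j ∈ Finset.range m, (if θ (w (j + 1)) ≠ θ (w j) then 1 else 0) := by
  have hθ : ∀ i, θ (v i) = (θ ∘ w) ((f ∘ v) i) := fun i => by simp [hf_eq]
  simp only [hθ]
  exact sum_ite_ne_comp_le_sum_ite_ne (θ ∘ w) horder.monotone fun i => hf_le (v i)

/-- Let `G = (V, E)` be a finite simple graph with `|V| = n`, let `θ : V → ℝ`, and let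
`w 0, …, w m` be a walk in `G` that visits every vertex of `V`.  Let `f u` denote the index of
the first appearance of the vertex `u` in the walk, and let `v : Fin n → V` be the enumeration
of `V` in order of first appearance in the walk, i.e. the bijective enumeration along which the
first-appearance index `f ∘ v` is strictly increasing.  Then the number of change points along
the induced ordering is bounded by the number of unequal consecutive pairs along the walk:
`∑_{i=1}^{n-1} 1[θ(v_{i+1}) ≠ θ(v_i)] ≤ ∑_{j=0}^{m-1} 1[θ(w_{j+1}) ≠ θ(w_j)]`. -/
theorem first_appearance_change_points {V : Type*} [Fintype V] {n : ℕ}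
    (hn : Fintype.card V = n) (G : SimpleGraph V) (θ : V → ℝ)
    (m : ℕ) (w : ℕ → V)
    (hwalk : ∀ j < m, G.Adj (w j) (w (j + 1)))
    (hvisit : ∀ u : V, ∃ j ≤ m, w j = u)
    (f : V → ℕ)
    (hf_le : ∀ u, f u ≤ m)
    (hf_eq : ∀ u, w (f u) = u)
    (hf_first : ∀ u, ∀ j < f u, w j ≠ u)
    (v : Fin n → V) (hv : Function.Bijective v)
    (horder : StrictMono (f ∘ v)) :
    (∑ i : Fin n, if h : (i : ℕ) + 1 < n then
        (if θ (v ⟨(i : ℕ) + 1, h⟩) ≠ θ (v i) then 1 else 0) else 0)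
      ≤ ∑ j ∈ Finset.range m, (if θ (w (j + 1)) ≠ θ (w j) then 1 else 0) :=
  first_appearance_change_points_general θ m w f hf_le hf_eq v horder
end

section
/- Let G = (V, E) be a finite connected simple graph with |V| = n ≥ 1 and let θ : V → ℝ. Then there exists an enumeration v_1, ..., v_n of V (an ordering obtained from a depth-first search) such that ∑_{i=1}^{n-1} 1[θ(v_{i+1}) ≠ θ(v_i)] ≤ 2 ∑_{{u,v} ∈ E} 1[θ(u) ≠ θ(v)]; in particular, if the number of edges of G across which θ changes value is at most s, then the number of change points of θ along the DFS-induced chain is at most 2s. -/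
/-!
A finite connected graph with at least two vertices has a vertex `x` whose removal leaves it
connected. Order the remaining vertices by induction and insert `x` right after a neighbour `y`:
since `1[θ a ≠ θ c] ≤ 1[θ a ≠ θ b] + 1[θ b ≠ θ c]`, this adds at most `2 · 1[θ x ≠ θ y]` change
points, and `{x, y}` is an edge of `G` that the smaller graph does not have.
-/

open Finset

section ChangeCount

variable {V W α : Type*} [DecidableEq α] (θ : V → α)

def jump (a b : V) : ℕ := if θ a ≠ θ b then 1 else 0

lemma jump_comm (a b : V) : jump θ a b = jump θ b a := by
  simp only [jump, ne_comm]

lemma jump_le_add (a b c : V) : jump θ a c ≤ jump θ a b + jump θ b c := by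
  unfold jump
  split_ifs <;> simp_all

def changeCount : List V → ℕ
  | a :: b :: l => jump θ a b + changeCount (b :: l)
  | _ => 0

@[simp] lemma changeCount_nil : changeCount θ [] = 0 := rfl
@[simp] lemma changeCount_singleton (a : V) : changeCount θ [a] = 0 := rfl
@[simp] lemma changeCount_cons_cons (a b : V) (l : List V) :
    changeCount θ (a :: b :: l) = jump θ a b + changeCount θ (b :: l) := rfl

lemma changeCount_append_cons (l r : List V) (b : V) :
    changeCount θ (l ++ b :: r) = changeCount θ (l ++ [b]) + changeCount θ (b :: r) := by
  induction l with
  | nil => simp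
  | cons a l ih => cases l <;> simp_all [Nat.add_assoc]

lemma changeCount_insert_le (l r : List V) (x y : V) :
    changeCount θ (l ++ y :: x :: r) ≤ changeCount θ (l ++ y :: r) + 2 * jump θ y x := by
  rw [changeCount_append_cons, changeCount_append_cons θ l r]
  cases r with
  | nil =>
    simp only [changeCount_cons_cons, changeCount_singleton]
    omega
  | cons z r =>
    have htri := jump_le_add θ x y z
    have hsymm := jump_comm θ x y
    simp only [changeCount_cons_cons]
    omega

lemma exists_insert_changeCount_le {l : List V} (hl : l.Nodup) {x y : V} (hx : x ∉ l)
    (hy : y ∈ l) : ∃ l' : List V, l'.Nodup ∧ (∀ v, v ∈ l' ↔ v = x ∨ v ∈ l) ∧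
      changeCount θ l' ≤ changeCount θ l + 2 * jump θ y x := by
  obtain ⟨s, r, rfl⟩ := List.append_of_mem hy
  have hperm : (s ++ y :: x :: r).Perm (x :: (s ++ y :: r)) := by
    simpa using (List.perm_middle (a := x) (l₁ := s ++ [y]) (l₂ := r))
  exact ⟨_, hperm.nodup_iff.mpr (List.nodup_cons.mpr ⟨hx, hl⟩),
    fun v => by simp [hperm.mem_iff], changeCount_insert_le θ s r x y⟩

lemma changeCount_comp (f : W → V) (l : List W) :
    changeCount (θ ∘ f) l = changeCount θ (l.map f) := by
  induction l with
  | nil => rfl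
  | cons a l ih => cases l <;> simp_all [jump]

lemma changeCount_eq_sum (l : List V) :
    changeCount θ l = ∑ i : Fin l.length,
      if h : i.1 + 1 < l.length then jump θ (l.get ⟨i.1 + 1, h⟩) (l.get i) else 0 := by
  induction l with
  | nil => simp
  | cons a l ih =>
    cases l with
    | nil => simp
    | cons b l =>
      rw [changeCount_cons_cons, ih, jump_comm]
      exact Eq.trans (by simp) (Fin.sum_univ_succ (n := (b :: l).length) _).symm

def edgeJump : Sym2 V → ℕ := Sym2.lift ⟨jump θ, jump_comm θ⟩

lemma edgeJump_comp (f : W → V) (e : Sym2 W) : edgeJump (θ ∘ f) e = edgeJump θ (e.map f) := by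
  induction e with
  | _ a b => rfl

end ChangeCount

namespace SimpleGraph

variable {V : Type*} [Fintype V] [DecidableEq V] {G : SimpleGraph V} [DecidableRel G.Adj]

lemma sum_edgeFinset_induce_compl_singleton_add_le {M : Type*} [AddCommMonoid M] [PartialOrder M]
    [CanonicallyOrderedAdd M] (f : Sym2 V → M) {x y : V} (hxy : G.Adj x y) :
    ∑ e ∈ (G.induce {x}ᶜ).edgeFinset, f (e.map (↑)) + f s(x, y) ≤ ∑ e ∈ G.edgeFinset, f e := by
  set E := (G.induce {x}ᶜ).edgeFinset.map (Function.Embedding.subtype _).sym2Map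
  have hxE : s(x, y) ∉ E := by
    simp only [E, Finset.mem_map, not_exists, not_and]
    intro e _ he
    obtain ⟨a, -, hax⟩ := Sym2.mem_map.mp (he ▸ Sym2.mem_mk_left x y)
    exact a.2 hax
  have hE : insert s(x, y) E ⊆ G.edgeFinset := by
    refine insert_subset (mem_edgeFinset.mpr hxy) fun e he => ?_
    obtain ⟨e, he', rfl⟩ := Finset.mem_map.mp he
    induction e with
    | _ a b => rw [mem_edgeFinset] at he' ⊢; exact he'
  calc ∑ e ∈ (G.induce {x}ᶜ).edgeFinset, f (e.map (↑)) + f s(x, y)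
      = ∑ e ∈ insert s(x, y) E, f e := by rw [sum_insert hxE, sum_map, add_comm]; rfl
    _ ≤ ∑ e ∈ G.edgeFinset, f e := sum_le_sum_of_subset hE

theorem Connected.exists_nodup_changeCount_le {α : Type*} [DecidableEq α] (hG : G.Connected)
    (θ : V → α) :
    ∃ l : List V, l.Nodup ∧ (∀ v, v ∈ l) ∧
      changeCount θ l ≤ 2 * ∑ e ∈ G.edgeFinset, edgeJump θ e := by
  induction hn : Fintype.card V using Nat.strong_induction_on generalizing V with
  | _ n ih =>
  rcases subsingleton_or_nontrivial V with _ | _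
  · obtain ⟨a⟩ := hG.nonempty
    exact ⟨[a], List.nodup_singleton a, fun v => by simp [Subsingleton.elim v a], by simp⟩
  · obtain ⟨x, hx⟩ := hG.exists_connected_induce_compl_singleton_of_finite_nontrivial
    obtain ⟨y, hxy⟩ := hG.preconnected.exists_adj_of_nontrivial x
    have hcard : Fintype.card ↥({x}ᶜ : Set V) < n := hn ▸ Fintype.card_subtype_lt (x := x) (by simp)
    obtain ⟨l, hl, hmem, hle⟩ := ih _ hcard hx (θ ∘ (↑)) rfl
    obtain ⟨l', hl', hmem', hle'⟩ := exists_insert_changeCount_le θ (hl.map Subtype.val_injective)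
      (x := x) (y := y) (by simp) (List.mem_map_of_mem (hmem ⟨y, hxy.ne'⟩))
    refine ⟨l', hl', fun v => (hmem' v).mpr ?_, ?_⟩
    · by_cases hv : v = x
      · exact .inl hv
      · exact .inr (List.mem_map_of_mem (f := Subtype.val) (hmem ⟨v, hv⟩))
    · have hsum := sum_edgeFinset_induce_compl_singleton_add_le (edgeJump θ) hxy
      simp only [edgeJump_comp] at hle
      rw [changeCount_comp] at hle
      have hxy_jump : edgeJump θ s(x, y) = jump θ y x := jump_comm θ x y
      omega

end SimpleGraph

/-- Let `G = (V, E)` be a finite connected simple graph with `|V| = n ≥ 1` and let `θ : V → ℝ`.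
Then there exists an enumeration `v 0, …, v (n-1)` of `V` (an ordering obtained from a
depth-first search) such that the number of change points of `θ` along the induced chain is at
most twice the number of edges of `G` across which `θ` changes value:
`∑_{i=1}^{n-1} 1[θ(v_{i+1}) ≠ θ(v_i)] ≤ 2 ∑_{{u,u'} ∈ E} 1[θ(u) ≠ θ(u')]`.
In particular, if the edge sparsity `s = ∑_{{u,u'} ∈ E} 1[θ(u) ≠ θ(u')]` is at most `s`, the
number of change points along the DFS-induced chain is at most `2s`. -/
theorem dfs_change_point_bound {V : Type*} [Fintype V] [DecidableEq V] {n : ℕ}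
    (hn : Fintype.card V = n)
    (G : SimpleGraph V) [DecidableRel G.Adj] (hG : G.Connected) (θ : V → ℝ) :
    ∃ v : Fin n → V, Function.Bijective v ∧
      (∑ i : Fin n, if h : (i : ℕ) + 1 < n then
          (if θ (v ⟨(i : ℕ) + 1, h⟩) ≠ θ (v i) then 1 else 0) else 0)
        ≤ 2 * ∑ e ∈ G.edgeFinset,
            Sym2.lift ⟨fun a b => if θ a ≠ θ b then 1 else 0,
              fun a b => by simp only [ne_comm]⟩ e := by
  obtain ⟨l, hl, hmem, hle⟩ := hG.exists_nodup_changeCount_le θ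
  let e := hl.getEquivOfForallMemList l hmem
  obtain rfl : l.length = n := (Fintype.card_fin _).symm.trans ((Fintype.card_congr e).trans hn)
  exact ⟨e, e.bijective, (changeCount_eq_sum θ l).symm.trans_le hle⟩
end
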